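/- Let S be an epigroup and x ∈ S. If x² = x^p · x̄^q for integers p > q ≥ 1, then x² = x^(p−q) · x^ω = (x̄̄)^(p−q), and in particular x² is a group element of S. -/

import Mathlib

/-- `spow x n = x ^ (n + 1)`: positive powers in a semigroup. -/
def spow {S : Type*} [Semigroup S] (x : S) : ℕ → S
  | 0 => x
  | n + 1 => spow x n * x

/-- `x` lies in a subgroup of `S` whose identity element is `e`. -/
def IsInSubgroupWithUnit {S : Type*} [Semigroup S] (e x : S) : Prop :=
  e * e = e ∧ x * e = x ∧ e * x = x ∧
    ∃ y : S, x * y = e ∧ y * x = e ∧ e * y = y ∧ y * e = y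

/-- `x` is a group element: it lies in some subgroup of `S`. -/
def IsGroupElement {S : Type*} [Semigroup S] (x : S) : Prop :=
  ∃ e : S, IsInSubgroupWithUnit e x

/-- An epigroup: a semigroup equipped with the pseudoinversion operation.
`pinv x` is the pseudoinverse of `x`; the axioms are Shevrin's characterization:
`x x̄ = x̄ x`, `x̄ x x̄ = x̄`, and `x^ω = x x̄` absorbs some power of `x`
(equivalently, some power of `x` lies in a subgroup with unit `x x̄`). -/
class Epigroup (S : Type*) extends Semigroup S where
  pinv : S → S
  mul_pinv_comm : ∀ x : S, x * pinv x = pinv x * x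
  pinv_mul_pinv : ∀ x : S, pinv x * x * pinv x = pinv x
  pow_absorb : ∀ x : S, ∃ n : ℕ, spow x n * (x * pinv x) = spow x n

open Epigroup

/-- `npowMul x p y = x ^ p * y`, where `x ^ 0 * y` is interpreted as `y`. -/
def npowMul {S : Type*} [Semigroup S] (x : S) : ℕ → S → S
  | 0, y => y
  | p + 1, y => x * npowMul x p y

/-- `mulNpow y x p = y * x ^ p`, where `y * x ^ 0` is interpreted as `y`. -/
def mulNpow {S : Type*} [Semigroup S] (y x : S) : ℕ → S
  | 0 => y
  | p + 1 => mulNpow y x p * x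

/-! The hypothesis collapses because `x^q·x̄^q = (x·x̄)^q = x^ω`, giving `x² = x^(p-q)·x^ω`.
Every `x^n·x^ω` lies in the maximal subgroup with unit `x^ω`, with inverse `x̄^n`. Some power of
`x̄` lies both in that subgroup and in the one with unit `x̄·x̄̄`; as a group element has only one
unit, `x̄·x̄̄ = x^ω`, and then `x̄̄ = x·x^ω`, so that `(x̄̄)^n = x^n·x^ω`. -/

section Semigroup

variable {S : Type*} [Semigroup S]

theorem spow_succ (x : S) (n : ℕ) : spow x (n + 1) = spow x n * x := rfl

theorem spow_add (x : S) (m n : ℕ) : spow x m * spow x n = spow x (m + n + 1) := by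
  induction n with
  | zero => rfl
  | succ n ih => rw [spow_succ, ← mul_assoc, ih]; rfl

theorem Commute.spow_left {x y : S} (h : Commute x y) (n : ℕ) : Commute (spow x n) y := by
  induction n with
  | zero => exact h
  | succ n ih => exact ih.mul_left h

theorem Commute.spow_right {x y : S} (h : Commute x y) (n : ℕ) : Commute x (spow y n) :=
  (h.symm.spow_left n).symm

theorem Commute.mul_spow {x y : S} (h : Commute x y) (n : ℕ) :
    spow (x * y) n = spow x n * spow y n := by
  induction n with
  | zero => rfl
  | succ n ih =>
    rw [spow_succ, ih, spow_succ, spow_succ, mul_assoc, ← mul_assoc (spow y n),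
      ← (h.spow_right n).eq, mul_assoc, mul_assoc]

theorem IsIdempotentElem.spow {e : S} (he : IsIdempotentElem e) (n : ℕ) : spow e n = e := by
  induction n with
  | zero => rfl
  | succ n ih => rw [spow_succ, ih, he.eq]

theorem Commute.mul_spow_of_isIdempotentElem {x e : S} (h : Commute x e)
    (he : IsIdempotentElem e) (n : ℕ) : spow (x * e) n = spow x n * e := by
  rw [h.mul_spow, he.spow]

theorem spow_mul_of_mul_eq {x e : S} (h : x * e = x) (n : ℕ) : spow x n * e = spow x n := by
  induction n with
  | zero => exact h
  | succ n _ => rw [spow_succ, mul_assoc, h]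

theorem npowMul_succ (x y : S) (n : ℕ) : npowMul x (n + 1) y = spow x n * y := by
  induction n with
  | zero => rfl
  | succ n ih =>
    change x * npowMul x (n + 1) y = _
    rw [ih, ← mul_assoc, ((Commute.refl x).spow_right n).eq]
    rfl

theorem isInSubgroupWithUnit_of_commute {g y e : S} (hc : Commute g y) (hgy : g * y = e)
    (hge : g * e = g) (hye : y * e = y) : IsInSubgroupWithUnit e g := by
  have hyg : y * g = e := by rw [← hc.eq, hgy]
  have heg : e * g = g := by rw [← hgy, mul_assoc, hyg, hge]
  have hey : e * y = y := by rw [← hyg, mul_assoc, hgy, hye]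
  refine ⟨?_, hge, heg, y, hgy, hyg, hey, hye⟩
  nth_rw 1 [← hgy]
  rw [mul_assoc, hye, hgy]

theorem IsInSubgroupWithUnit.unit_eq {e f g : S} (he : IsInSubgroupWithUnit e g)
    (hf : IsInSubgroupWithUnit f g) : e = f := by
  obtain ⟨-, -, heg, y, -, hyg, -, -⟩ := he
  obtain ⟨-, hgf, -, z, hgz, -, -, -⟩ := hf
  calc e = y * g * f := by rw [mul_assoc, hgf, hyg]
    _ = e * (g * z) := by rw [hyg, hgz]
    _ = f := by rw [← mul_assoc, heg, hgz]

end Semigroup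

section Epigroup

variable {S : Type*} [Epigroup S] (x : S)

theorem commute_pinv : Commute x (pinv x) := mul_pinv_comm x

theorem isIdempotentElem_mul_pinv : IsIdempotentElem (x * pinv x) := by
  rw [IsIdempotentElem, mul_assoc x, ← mul_assoc (pinv x), pinv_mul_pinv]

theorem commute_mul_pinv : Commute x (x * pinv x) := (Commute.refl x).mul_right (commute_pinv x)

theorem pinv_mul_mul_pinv : pinv x * (x * pinv x) = pinv x := by
  rw [← mul_assoc, pinv_mul_pinv]

theorem pinv_commute_mul_pinv : Commute (pinv x) (x * pinv x) :=
  (commute_pinv x).symm.mul_right (Commute.refl _)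

theorem spow_mul_spow_pinv (n : ℕ) : spow x n * spow (pinv x) n = x * pinv x := by
  rw [← (commute_pinv x).mul_spow, (isIdempotentElem_mul_pinv x).spow]

theorem commute_spow_mul_mul_pinv_spow_pinv (n : ℕ) :
    Commute (spow x n * (x * pinv x)) (spow (pinv x) n) :=
  (((commute_pinv x).spow_left n).spow_right n).mul_left
    ((pinv_commute_mul_pinv x).spow_left n).symm

theorem spow_mul_mul_pinv_mul_spow_pinv (n : ℕ) :
    spow x n * (x * pinv x) * spow (pinv x) n = x * pinv x := by
  rw [mul_assoc, ← ((pinv_commute_mul_pinv x).spow_left n).eq, ← mul_assoc, spow_mul_spow_pinv,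
    (isIdempotentElem_mul_pinv x).eq]

theorem isInSubgroupWithUnit_spow_mul_mul_pinv (n : ℕ) :
    IsInSubgroupWithUnit (x * pinv x) (spow x n * (x * pinv x)) :=
  isInSubgroupWithUnit_of_commute (commute_spow_mul_mul_pinv_spow_pinv x n)
    (spow_mul_mul_pinv_mul_spow_pinv x n) (by rw [mul_assoc, (isIdempotentElem_mul_pinv x).eq])
    (spow_mul_of_mul_eq (pinv_mul_mul_pinv x) n)

theorem isInSubgroupWithUnit_spow_pinv (n : ℕ) :
    IsInSubgroupWithUnit (x * pinv x) (spow (pinv x) n) :=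
  isInSubgroupWithUnit_of_commute (commute_spow_mul_mul_pinv_spow_pinv x n).symm
    (by rw [← (commute_spow_mul_mul_pinv_spow_pinv x n).eq, spow_mul_mul_pinv_mul_spow_pinv])
    (spow_mul_of_mul_eq (pinv_mul_mul_pinv x) n)
    (by rw [mul_assoc, (isIdempotentElem_mul_pinv x).eq])

theorem pinv_mul_pinv_pinv : pinv x * pinv (pinv x) = x * pinv x := by
  obtain ⟨m, hm⟩ := pow_absorb (pinv x)
  have h := isInSubgroupWithUnit_spow_mul_mul_pinv (pinv x) m
  rw [hm] at h
  exact h.unit_eq (isInSubgroupWithUnit_spow_pinv x m)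

theorem pinv_pinv : pinv (pinv x) = x * (x * pinv x) := by
  have hw : pinv x * (x * (x * pinv x)) = x * pinv x := by
    rw [← mul_assoc, ← (commute_pinv x).eq, (isIdempotentElem_mul_pinv x).eq]
  calc pinv (pinv x) = pinv (pinv x) * (pinv x * pinv (pinv x)) := by
        rw [← mul_assoc, pinv_mul_pinv]
    _ = pinv (pinv x) * pinv x * (x * (x * pinv x)) := by
        rw [pinv_mul_pinv_pinv, mul_assoc, hw]
    _ = x * (x * pinv x) := by
        rw [← (commute_pinv (pinv x)).eq, pinv_mul_pinv_pinv, ← mul_assoc,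
          ← (commute_mul_pinv x).eq, mul_assoc, (isIdempotentElem_mul_pinv x).eq]

theorem spow_pinv_pinv (n : ℕ) : spow (pinv (pinv x)) n = spow x n * (x * pinv x) := by
  rw [pinv_pinv, (commute_mul_pinv x).mul_spow_of_isIdempotentElem (isIdempotentElem_mul_pinv x)]

theorem npowMul_add_spow_pinv (m n : ℕ) :
    npowMul x (m + n + 2) (spow (pinv x) n) = spow x m * (x * pinv x) := by
  rw [npowMul_succ, ← spow_add, mul_assoc, spow_mul_spow_pinv]

end Epigroup

/-- If `x² = x^p·x̄^q` with `p > q ≥ 1`, then `x² = x^(p-q)·x^ω = (x̄̄)^(p-q)` and `x²`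
is a group element. -/
theorem sq_eq_pow_omega {S : Type*} [Epigroup S] (x : S) (p q : ℕ)
    (hq : 1 ≤ q) (hpq : q < p)
    (h : x * x = npowMul x p (spow (pinv x) (q - 1))) :
    x * x = spow x (p - q - 1) * (x * pinv x) ∧
      x * x = spow (pinv (pinv x)) (p - q - 1) ∧
      IsGroupElement (x * x) := by
  have hsq : x * x = spow x (p - q - 1) * (x * pinv x) := by
    rwa [show p = p - q - 1 + (q - 1) + 2 by omega, npowMul_add_spow_pinv] at h
  refine ⟨hsq, by rwa [spow_pinv_pinv], x * pinv x, ?_⟩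
  rw [hsq]
  exact isInSubgroupWithUnit_spow_mul_mul_pinv x _
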